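/- arXiv:2512.20214 — 4 statements merged into one kernel-verified Lean document; each statement's English description precedes it below -/
import Mathlib

section
/- Let S′ be a subprogram obtained from a HeyVL program S by erasing only reductive statements (replacing them with skip). Then vp[S](X) ≤ vp[S′](X) pointwise for all expectations X. Consequently, if there exists a state where pre X exceeds vp[S′](Y), then S′ is an error-witnessing slice of S: any counterexample state of S′ (i.e., a state σ with X(σ) ≰ vp[S′](Y)(σ)) is also a counterexample state of S. -/
open scoped ENNReal

/-- HeyVL statements over variables `Var` and values `Val`.
Program states are functions `Var → Val`, expectations are `(Var → Val) → ℝ≥0∞`. -/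
inductive Stmt (Var Val : Type) where
  /-- effectless statement (used for erased statements) -/
  | skip
  /-- probabilistic assignment `x ≈ μ` for a finite-support distribution
  `μ = p₁·t₁ + … + pₙ·tₙ` given as a list of pairs of probabilities and
  value expressions -/
  | passign (x : Var) (μ : List (ℝ≥0∞ × ((Var → Val) → Val)))
  | assert (Y : (Var → Val) → ℝ≥0∞)
  | assume_ (Y : (Var → Val) → ℝ≥0∞)
  | coassert (Y : (Var → Val) → ℝ≥0∞)
  | coassume (Y : (Var → Val) → ℝ≥0∞)
  | havoc (x : Var)
  | cohavoc (x : Var)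
  | validate
  | covalidate
  | reward (a : (Var → Val) → ℝ≥0∞)
  | seq (S₁ S₂ : Stmt Var Val)
  | demonic (S₁ S₂ : Stmt Var Val)
  | angelic (S₁ S₂ : Stmt Var Val)

variable {Var Val : Type} [DecidableEq Var]

/-- The verification pre-expectation transformer `vp[S]`. -/
noncomputable def vp : Stmt Var Val → ((Var → Val) → ℝ≥0∞) → ((Var → Val) → ℝ≥0∞)
  | .skip, X => X
  | .passign x μ, X =>
      fun σ => (μ.map (fun pt => pt.1 * X (Function.update σ x (pt.2 σ)))).sum
  | .assert Y, X => fun σ => Y σ ⊓ X σ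
  | .assume_ Y, X => fun σ => if Y σ ≤ X σ then ⊤ else X σ
  | .coassert Y, X => fun σ => Y σ ⊔ X σ
  | .coassume Y, X => fun σ => if X σ ≤ Y σ then 0 else X σ
  | .havoc x, X => fun σ => ⨅ v : Val, X (Function.update σ x v)
  | .cohavoc x, X => fun σ => ⨆ v : Val, X (Function.update σ x v)
  | .validate, X => fun σ => if X σ = ⊤ then ⊤ else 0
  | .covalidate, X => fun σ => if X σ = 0 then 0 else ⊤
  | .reward a, X => fun σ => X σ + a σ
  | .seq S₁ S₂, X => vp S₁ (vp S₂ X)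
  | .demonic S₁ S₂, X => fun σ => vp S₁ X σ ⊓ vp S₂ X σ
  | .angelic S₁ S₂, X => fun σ => vp S₁ X σ ⊔ vp S₂ X σ

/-- A statement is reductive if `vp[S](X) ≤ X` pointwise for all expectations `X`. -/
def Reductive (S : Stmt Var Val) : Prop :=
  ∀ (X : (Var → Val) → ℝ≥0∞) (σ : Var → Val), vp S X σ ≤ X σ

/-- `ErasesReductive S S′` holds iff `S′` is a subprogram obtained from `S` by
erasing only reductive statements (replacing them with `skip`), lifted
compositionally through sequencing and both choice constructs. -/
inductive ErasesReductive : Stmt Var Val → Stmt Var Val → Prop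
  | refl (S : Stmt Var Val) : ErasesReductive S S
  | erase (S : Stmt Var Val) (h : Reductive S) : ErasesReductive S .skip
  | seq {S₁ S₂ S₁' S₂' : Stmt Var Val} :
      ErasesReductive S₁ S₁' → ErasesReductive S₂ S₂' →
      ErasesReductive (.seq S₁ S₂) (.seq S₁' S₂')
  | demonic {S₁ S₂ S₁' S₂' : Stmt Var Val} :
      ErasesReductive S₁ S₁' → ErasesReductive S₂ S₂' →
      ErasesReductive (.demonic S₁ S₂) (.demonic S₁' S₂')
  | angelic {S₁ S₂ S₁' S₂' : Stmt Var Val} :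
      ErasesReductive S₁ S₁' → ErasesReductive S₂ S₂' →
      ErasesReductive (.angelic S₁ S₂) (.angelic S₁' S₂')

theorem vp_monotone (S : Stmt Var Val) : Monotone (vp S) := by
  induction S with
  | skip => exact monotone_id
  | passign x μ =>
      intro X Y h σ
      exact List.sum_le_sum fun _ _ => mul_le_mul_right (h _) _
  | assert Z => exact fun X Y h σ => inf_le_inf_left _ (h σ)
  | assume_ Z =>
      intro X Y h σ
      simp only [vp]
      split_ifs with hX hY hY
      · rfl
      · exact absurd (hX.trans (h σ)) hY
      · exact le_top
      · exact h σ
  | coassert Z => exact fun X Y h σ => sup_le_sup_left (h σ) _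
  | coassume Z =>
      intro X Y h σ
      simp only [vp]
      split_ifs with hX hY hY
      · rfl
      · exact zero_le
      · exact absurd ((h σ).trans hY) hX
      · exact h σ
  | havoc x => exact fun X Y h σ => iInf_mono fun v => h _
  | cohavoc x => exact fun X Y h σ => iSup_mono fun v => h _
  | validate =>
      intro X Y h σ
      simp only [vp]
      split_ifs with hX hY hY
      · rfl
      · exact absurd (top_le_iff.mp (hX ▸ h σ)) hY
      · exact le_top
      · rfl
  | covalidate =>
      intro X Y h σ
      simp only [vp]
      split_ifs with hX hY hY
      · rfl
      · exact zero_le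
      · exact absurd (nonpos_iff_eq_zero.mp (hY ▸ h σ)) hX
      · rfl
  | reward a => exact fun X Y h σ => add_le_add_left (h σ) _
  | seq S₁ S₂ ih₁ ih₂ => exact ih₁.comp ih₂
  | demonic S₁ S₂ ih₁ ih₂ => exact fun X Y h σ => inf_le_inf (ih₁ h σ) (ih₂ h σ)
  | angelic S₁ S₂ ih₁ ih₂ => exact fun X Y h σ => sup_le_sup (ih₁ h σ) (ih₂ h σ)

theorem ErasesReductive.vp_le {S S' : Stmt Var Val} (h : ErasesReductive S S') :
    vp S ≤ vp S' := by
  induction h with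
  | refl S => exact le_rfl
  | erase S hS => exact hS
  | seq _ _ ih₁ ih₂ => exact fun X => (vp_monotone _ (ih₂ X)).trans (ih₁ _)
  | demonic _ _ ih₁ ih₂ => exact fun X σ => inf_le_inf (ih₁ X σ) (ih₂ X σ)
  | angelic _ _ ih₁ ih₂ => exact fun X σ => sup_le_sup (ih₁ X σ) (ih₂ X σ)

/-- Erasing reductive statements yields `vp[S](X) ≤ vp[S′](X)` pointwise; hence if `S′`
has a counterexample state w.r.t. `(X, Y)`, then `S′` is an error-witnessing slice of
`S`: every counterexample state of `S′` is a counterexample state of `S`. -/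
theorem erase_reductive_errorWitnessing (S S' : Stmt Var Val)
    (h : ErasesReductive S S') :
    (∀ (X : (Var → Val) → ℝ≥0∞) (σ : Var → Val), vp S X σ ≤ vp S' X σ) ∧
    (∀ (X Y : (Var → Val) → ℝ≥0∞), (∃ σ, ¬ X σ ≤ vp S' Y σ) →
      ∀ σ, ¬ X σ ≤ vp S' Y σ → ¬ X σ ≤ vp S Y σ) :=
  ⟨h.vp_le, fun _ Y _ σ hS' hS => hS' (hS.trans (h.vp_le Y σ))⟩
end

section
/- If a HeyVL program S contains neither assert nor coassume statements, then vp[S](∞) = ∞, where ∞ denotes the constant-∞ expectation. Dually, if S contains neither coassert nor assume nor reward statements, then vp[S](0) = 0, where 0 denotes the constant-zero expectation. -/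
open scoped ENNReal

variable {Var Val : Type} [DecidableEq Var]

/-- `S` contains neither `assert` nor `coassume` statements
(and all its distributions sum to `1`). -/
def NoAssertNoCoassume : Stmt Var Val → Prop
  | .assert _ => False
  | .coassume _ => False
  | .passign _ μ => (μ.map Prod.fst).sum = 1
  | .seq S₁ S₂ => NoAssertNoCoassume S₁ ∧ NoAssertNoCoassume S₂
  | .demonic S₁ S₂ => NoAssertNoCoassume S₁ ∧ NoAssertNoCoassume S₂
  | .angelic S₁ S₂ => NoAssertNoCoassume S₁ ∧ NoAssertNoCoassume S₂
  | _ => True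

/-- `S` contains neither `coassert` nor `assume` nor `reward` statements
(and all its distributions sum to `1`). -/
def NoCoassertNoAssumeNoReward : Stmt Var Val → Prop
  | .coassert _ => False
  | .assume_ _ => False
  | .reward _ => False
  | .passign _ μ => (μ.map Prod.fst).sum = 1
  | .seq S₁ S₂ => NoCoassertNoAssumeNoReward S₁ ∧ NoCoassertNoAssumeNoReward S₂
  | .demonic S₁ S₂ => NoCoassertNoAssumeNoReward S₁ ∧ NoCoassertNoAssumeNoReward S₂
  | .angelic S₁ S₂ => NoCoassertNoAssumeNoReward S₁ ∧ NoCoassertNoAssumeNoReward S₂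
  | _ => True

/-- A HeyVL program without `assert`/`coassume` verifies: `vp[S](∞) = ∞`.
Dually, a program without `coassert`/`assume`/`reward` co-verifies: `vp[S](0) = 0`. -/
theorem vp_preserve_top_bot [Nonempty Val] (S : Stmt Var Val) :
    (NoAssertNoCoassume S → ∀ σ, vp S (fun _ => (⊤ : ℝ≥0∞)) σ = ⊤) ∧
    (NoCoassertNoAssumeNoReward S → ∀ σ, vp S (fun _ => (0 : ℝ≥0∞)) σ = 0) := by
  induction S with
  | skip => exact ⟨fun _ _ => rfl, fun _ _ => rfl⟩
  | passign x μ =>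
    constructor
    · intro h σ
      simp only [vp]
      have key : ∀ l : List (ℝ≥0∞ × ((Var → Val) → Val)),
          (l.map (fun pt => pt.1 * ⊤)).sum = (l.map Prod.fst).sum * ⊤ := by
        intro l
        induction l with
        | nil => simp
        | cons a l ih => simp [ih, add_mul]
      rw [key, h, one_mul]
    · intro _ σ
      simp only [vp]
      have : (μ.map (fun pt => pt.1 * (0:ℝ≥0∞))).sum = 0 := by
        induction μ with
        | nil => simp
        | cons a l ih => simp [ih]
      exact this
  | assert Y => exact ⟨fun h => h.elim, fun _ σ => by simp [vp]⟩
  | assume_ Y => exact ⟨fun _ σ => by simp [vp], fun h => h.elim⟩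
  | coassert Y => exact ⟨fun _ σ => by simp [vp], fun h => h.elim⟩
  | coassume Y => exact ⟨fun h => h.elim, fun _ σ => by simp [vp]⟩
  | havoc x => exact ⟨fun _ σ => by simp [vp], fun _ σ => by simp [vp]⟩
  | cohavoc x => exact ⟨fun _ σ => by simp [vp], fun _ σ => by simp [vp]⟩
  | validate => exact ⟨fun _ σ => by simp [vp], fun _ σ => by simp [vp]⟩
  | covalidate => exact ⟨fun _ σ => by simp [vp], fun _ σ => by simp [vp]⟩
  | reward a => exact ⟨fun _ σ => by simp [vp], fun h => h.elim⟩
  | seq S₁ S₂ ih₁ ih₂ =>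
    constructor
    · intro h σ
      have h2 : (vp S₂ (fun _ => (⊤:ℝ≥0∞))) = fun _ => (⊤:ℝ≥0∞) :=
        funext (ih₂.1 h.2)
      simp only [vp, h2]
      exact ih₁.1 h.1 σ
    · intro h σ
      have h2 : (vp S₂ (fun _ => (0:ℝ≥0∞))) = fun _ => (0:ℝ≥0∞) :=
        funext (ih₂.2 h.2)
      simp only [vp, h2]
      exact ih₁.2 h.1 σ
  | demonic S₁ S₂ ih₁ ih₂ =>
    exact ⟨fun h σ => by simp [vp, ih₁.1 h.1 σ, ih₂.1 h.2 σ],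
           fun h σ => by simp [vp, ih₁.2 h.1 σ, ih₂.2 h.2 σ]⟩
  | angelic S₁ S₂ ih₁ ih₂ =>
    exact ⟨fun h σ => by simp [vp, ih₁.1 h.1 σ, ih₂.1 h.2 σ],
           fun h σ => by simp [vp, ih₁.2 h.1 σ, ih₂.2 h.2 σ]⟩
end

section
/- Removing the assert from a verification encoding shows unverifiability with any post: let S = assume(X); S′; assert(Y). If assume(X); S′ is an error-witnessing slice of S w.r.t. pre ∞ and post ∞ (in particular ∞ ≰ vp[assume(X); S′](∞) at some state), then for every expectation Z, X ≰ vp[S′](Z), i.e., the triple ⟨X⟩ S′ ⟨Z⟩ fails. -/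
open scoped ENNReal

/-- The quantitative implication: `vp[assume(X)](W) = X → W`. -/
noncomputable def qimp {States : Type} (X W : States → ℝ≥0∞) : States → ℝ≥0∞ :=
  fun σ => if X σ ≤ W σ then ⊤ else W σ

/-- Removing the `assert` from a verification encoding `S = assume(X); S′; assert(Y)`
shows unverifiability with any post: if `assume(X); S′` is an error-witnessing slice of
`S` w.r.t. pre `∞` and post `∞`, then for every expectation `Z`, `X ≰ vp[S′](Z)`. -/
theorem remove_assert_unverifiable {States : Type}
    (X Y : States → ℝ≥0∞) (vpS' : (States → ℝ≥0∞) → (States → ℝ≥0∞))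
    (hmono : ∀ W W' : States → ℝ≥0∞, (∀ σ, W σ ≤ W' σ) → ∀ σ, vpS' W σ ≤ vpS' W' σ)
    -- the slice `assume(X); S′` has a counterexample state w.r.t. `(∞, ∞)` ...
    (hcex : ∃ σ, ¬ (⊤ : ℝ≥0∞) ≤ qimp X (vpS' (fun _ => ⊤)) σ)
    -- ... and every counterexample state of the slice is one of the original
    -- program `S = assume(X); S′; assert(Y)`
    (htransfer : ∀ σ, ¬ (⊤ : ℝ≥0∞) ≤ qimp X (vpS' (fun _ => ⊤)) σ →
      ¬ (⊤ : ℝ≥0∞) ≤ qimp X (vpS' (fun σ' => Y σ' ⊓ ⊤)) σ) :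
    ∀ Z : States → ℝ≥0∞, ¬ ∀ σ, X σ ≤ vpS' Z σ := by
  intro Z hZ
  obtain ⟨σ, hσ⟩ := hcex
  apply hσ
  unfold qimp
  have hX : X σ ≤ vpS' (fun _ => ⊤) σ :=
    le_trans (hZ σ) (hmono Z (fun _ => ⊤) (fun _ => le_top) σ)
  simp [hX]
end

section
/- Park induction correctness message 'assuming the invariant is not necessary': let S = Park(b, C, I) be the encoding assert(I); havoc(v⃗); validate; assume(I); if(b){ C; assert(I); assume([false]) } else {}, and let S′ be obtained from S by removing the statement assume(I). If X ≤ vp[S′](Y) pointwise, then X ≤ vp[Park(b, C, ∞)](Y) pointwise, where Park(b, C, ∞) replaces every occurrence of I in the encoding by the constant-∞ expectation. -/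
/-! The two encodings differ in three places: `assert(I)` becomes `assert(∞)` twice, which can
only increase `vp`, and `skip` becomes `assume(∞)`, whose `vp` is the identity. Since every
`vp[S]` is monotone, these improvements propagate through the surrounding program context. -/

open scoped ENNReal

variable {Var Val : Type} [DecidableEq Var]

/-- The Boolean embedding `[b]`: `∞` where `b` holds, `0` elsewhere. -/
noncomputable def emb (b : (Var → Val) → Bool) : (Var → Val) → ℝ≥0∞ :=
  fun σ => if b σ then ⊤ else 0

/-- The embedding `[¬b]` of the negated guard. -/
noncomputable def embNot (b : (Var → Val) → Bool) : (Var → Val) → ℝ≥0∞ :=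
  fun σ => if b σ then 0 else ⊤

/-- `if(b){S₁}else{S₂}`, encoded as the demonic choice of the guarded branches. -/
noncomputable def ifStmt (b : (Var → Val) → Bool) (S₁ S₂ : Stmt Var Val) : Stmt Var Val :=
  .demonic (.seq (.assume_ (emb b)) S₁) (.seq (.assume_ (embNot b)) S₂)

/-- `havoc(v⃗); rest` for a list of variables `v⃗`. -/
noncomputable def havAll (vs : List Var) (rest : Stmt Var Val) : Stmt Var Val :=
  vs.foldr (fun x S => .seq (.havoc x) S) rest

/-- The Park induction encoding
`Park(b, C, I) = assert(I); havoc(v⃗); validate; assume(I);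
if(b){ C; assert(I); assume([false]) } else {}`. -/
noncomputable def Park (b : (Var → Val) → Bool) (C : Stmt Var Val)
    (I : (Var → Val) → ℝ≥0∞) (vs : List Var) : Stmt Var Val :=
  .seq (.assert I) (havAll vs (.seq .validate (.seq (.assume_ I)
    (ifStmt b (.seq C (.seq (.assert I) (.assume_ (fun _ => 0)))) .skip))))

/-- `Park(b, C, I)` with the statement `assume(I)` removed (replaced by `skip`). -/
noncomputable def ParkNoAssumeInv (b : (Var → Val) → Bool) (C : Stmt Var Val)
    (I : (Var → Val) → ℝ≥0∞) (vs : List Var) : Stmt Var Val :=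
  .seq (.assert I) (havAll vs (.seq .validate (.seq .skip
    (ifStmt b (.seq C (.seq (.assert I) (.assume_ (fun _ => 0)))) .skip))))

theorem vp_assume_top : vp (.assume_ fun _ => ⊤ : Stmt Var Val) = vp .skip := by
  funext W σ
  simp only [vp, top_le_iff]
  split_ifs with h
  · exact h.symm
  · rfl

theorem vp_assert_mono {I J : (Var → Val) → ℝ≥0∞} (h : I ≤ J) :
    vp (.assert I : Stmt Var Val) ≤ vp (.assert J) :=
  fun _ σ => inf_le_inf_right _ (h σ)

theorem vp_seq_mono {S₁ S₁' S₂ S₂' : Stmt Var Val} (h₁ : vp S₁ ≤ vp S₁')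
    (h₂ : vp S₂ ≤ vp S₂') : vp (.seq S₁ S₂) ≤ vp (.seq S₁' S₂') :=
  fun W => (vp_monotone S₁ (h₂ W)).trans (h₁ _)

theorem vp_demonic_mono {S₁ S₁' S₂ S₂' : Stmt Var Val} (h₁ : vp S₁ ≤ vp S₁')
    (h₂ : vp S₂ ≤ vp S₂') : vp (.demonic S₁ S₂) ≤ vp (.demonic S₁' S₂') :=
  fun W σ => inf_le_inf (h₁ W σ) (h₂ W σ)

theorem vp_ifStmt_mono (b : (Var → Val) → Bool) {S₁ S₁' S₂ S₂' : Stmt Var Val}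
    (h₁ : vp S₁ ≤ vp S₁') (h₂ : vp S₂ ≤ vp S₂') :
    vp (ifStmt b S₁ S₂) ≤ vp (ifStmt b S₁' S₂') :=
  vp_demonic_mono (vp_seq_mono le_rfl h₁) (vp_seq_mono le_rfl h₂)

theorem vp_havAll_mono (vs : List Var) {S S' : Stmt Var Val} (h : vp S ≤ vp S') :
    vp (havAll vs S) ≤ vp (havAll vs S') := by
  induction vs with
  | nil => exact h
  | cons x xs ih => exact vp_seq_mono le_rfl ih

/-- "Assuming the invariant is not necessary": if the Park encoding with `assume(I)`
removed verifies w.r.t. `(X, Y)`, then the Park encoding with invariant `∞` verifies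
w.r.t. `(X, Y)`. -/
theorem park_assume_invariant_unnecessary (b : (Var → Val) → Bool) (C : Stmt Var Val)
    (I X Y : (Var → Val) → ℝ≥0∞) (vs : List Var)
    (h : ∀ σ, X σ ≤ vp (ParkNoAssumeInv b C I vs) Y σ) :
    ∀ σ, X σ ≤ vp (Park b C (fun _ => ⊤) vs) Y σ := by
  have hassert : vp (.assert I : Stmt Var Val) ≤ vp (.assert fun _ => ⊤) := vp_assert_mono le_top
  have hpark : vp (ParkNoAssumeInv b C I vs) ≤ vp (Park b C (fun _ => ⊤) vs) :=
    vp_seq_mono hassert <| vp_havAll_mono vs <| vp_seq_mono le_rfl <|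
      vp_seq_mono vp_assume_top.ge <|
        vp_ifStmt_mono b (vp_seq_mono le_rfl (vp_seq_mono hassert le_rfl)) le_rfl
  exact fun σ => (h σ).trans (hpark Y σ)
end
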